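/- arXiv:2211.08907 — 2 statements merged into one kernel-verified Lean document; each statement's English description precedes it below -/
import Mathlib

section
/- For all n ≥ 1, the pair (x, y) = (3B_n, 3C_n) satisfies 8x² − y² = −9, where B_n are balancing numbers and C_n = √(8B_n²+1) are Lucas-balancing numbers. Conversely, every positive integer solution of 8x² − y² = −9 is of this form. -/
def B : ℕ → ℤ
  | 0 => 0
  | 1 => 1
  | (n+2) => 6 * B (n+1) - B n

def C : ℕ → ℤ
  | 0 => 1
  | 1 => 3
  | (n+2) => 6 * C (n+1) - C n

def b : ℕ → ℤ
  | 0 => 0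
  | 1 => 0
  | (n+2) => 6 * b (n+1) - b n + 2

def c : ℕ → ℤ
  | 0 => -1
  | 1 => 1
  | (n+2) => 6 * c (n+1) - c n

def P : ℕ → ℤ
  | 0 => 0
  | 1 => 1
  | (n+2) => 2 * P (n+1) + P n

/-!
Since `3 ∣ x² + y²` forces `3 ∣ x` and `3 ∣ y`, the solutions of `8x² − y² = −9` are three times
the solutions of the Pell equation `v² − 8u² = 1`. The fundamental solution of the latter is
`3 + √8 = C 1 + B 1 √8`, and `(C n, B n)` are the coordinates of its powers, so every positive
solution is `(B n, C n)` for some `n ≥ 1`.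
-/

open Pell

theorem Int.dvd_of_dvd_sq_add_sq_of_mod_four_eq_three {p : ℕ} [Fact p.Prime] (hp : p % 4 = 3)
    {x y : ℤ} (h : (p : ℤ) ∣ x ^ 2 + y ^ 2) : (p : ℤ) ∣ x ∧ (p : ℤ) ∣ y := by
  have dvd_right : ∀ {x y : ℤ}, (p : ℤ) ∣ x ^ 2 + y ^ 2 → (p : ℤ) ∣ y := by
    intro x y h
    rw [← ZMod.intCast_zmod_eq_zero_iff_dvd] at h ⊢
    by_contra hy
    push_cast at h
    exact ZMod.mod_four_ne_three_of_sq_eq_neg_sq' hy (eq_neg_of_add_eq_zero_left h) hp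
  exact ⟨dvd_right (add_comm (x ^ 2) _ ▸ h), dvd_right h⟩

theorem B_succ_and_C_succ :
    ∀ n : ℕ, B (n + 1) = 3 * B n + C n ∧ C (n + 1) = 8 * B n + 3 * C n
  | 0 => by norm_num [B, C]
  | 1 => by norm_num [B, C]
  | n + 2 => by
    obtain ⟨hB, hC⟩ := B_succ_and_C_succ n
    obtain ⟨hB', hC'⟩ := B_succ_and_C_succ (n + 1)
    constructor
    · rw [B, C]
      linarith
    · rw [C, B]
      linarith

def pellEightFundamental : Solution₁ 8 :=
  Solution₁.mk 3 1 (by norm_num)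

theorem isFundamental_pellEightFundamental : IsFundamental pellEightFundamental := by
  refine ⟨by norm_num [pellEightFundamental], by norm_num [pellEightFundamental], fun {a} ha => ?_⟩
  have hy : a.y ≠ 0 := Solution₁.y_ne_zero_of_one_lt_x ha
  have hx := a.prop_x
  show 3 ≤ a.x
  nlinarith [sq_pos_of_ne_zero hy]

theorem pellEightFundamental_pow (n : ℕ) :
    (pellEightFundamental ^ n).x = C n ∧ (pellEightFundamental ^ n).y = B n := by
  induction n with
  | zero => simp [B, C, Solution₁.x_one, Solution₁.y_one]
  | succ n ih =>
    obtain ⟨hB, hC⟩ := B_succ_and_C_succ n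
    rw [pow_succ, Solution₁.x_mul, Solution₁.y_mul, ih.1, ih.2, hB, hC]
    simp only [pellEightFundamental, Solution₁.x_mk, Solution₁.y_mk]
    constructor <;> ring

theorem C_sq_sub_eight_mul_B_sq (n : ℕ) : C n ^ 2 - 8 * B n ^ 2 = 1 := by
  obtain ⟨hx, hy⟩ := pellEightFundamental_pow n
  rw [← hx, ← hy]
  exact Solution₁.prop _

theorem exists_eq_B_and_eq_C {u v : ℤ} (hu : 0 < u) (hv : 0 < v) (h : v ^ 2 - 8 * u ^ 2 = 1) :
    ∃ n : ℕ, 1 ≤ n ∧ u = B n ∧ v = C n := by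
  obtain ⟨n, hn⟩ := isFundamental_pellEightFundamental.eq_pow_of_nonneg
    (a := Solution₁.mk v u h) hv hu.le
  obtain ⟨hx, hy⟩ := pellEightFundamental_pow n
  rw [← hn, Solution₁.x_mk] at hx
  rw [← hn, Solution₁.y_mk] at hy
  refine ⟨n, Nat.one_le_iff_ne_zero.mpr ?_, hy, hx⟩
  rintro rfl
  exact hu.ne' (by simpa [B] using hy)

theorem pell_neg_nine_solutions :
    (∀ n : ℕ, 1 ≤ n → 8 * (3 * B n) ^ 2 - (3 * C n) ^ 2 = -9) ∧
    (∀ x y : ℤ, 0 < x → 0 < y → 8 * x ^ 2 - y ^ 2 = -9 →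
      ∃ n : ℕ, 1 ≤ n ∧ x = 3 * B n ∧ y = 3 * C n) := by
  refine ⟨fun n _ => by linear_combination -9 * C_sq_sub_eight_mul_B_sq n, ?_⟩
  intro x y hx hy h
  have h3 : (3 : ℤ) ∣ x ^ 2 + y ^ 2 := ⟨3 * (x ^ 2 + 1), by linear_combination -h⟩
  obtain ⟨⟨u, rfl⟩, ⟨v, rfl⟩⟩ :=
    Int.dvd_of_dvd_sq_add_sq_of_mod_four_eq_three (p := 3) (by norm_num) (by exact_mod_cast h3)
  simp only [Nat.cast_ofNat] at hx hy h
  have hpell : v ^ 2 - 8 * u ^ 2 = 1 := by linarith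
  obtain ⟨n, hn, rfl, rfl⟩ := exists_eq_B_and_eq_C (by omega) (by omega) hpell
  exact ⟨n, hn, rfl, rfl⟩
end

section
/- For every n ≥ 1, the pairs (x, y) = (6B_{n−1}+C_{n−1}, 4B_{n−1}+3C_{n−1}) and (x, y) = (6B_n − C_n, −4B_n + 3C_n) satisfy 2x² − y² = −7. -/
lemma BC : ∀ n, B (n+1) = 3 * B n + C n ∧ C (n+1) = 3 * C n + 8 * B n := by
  intro n
  induction n with
  | zero => simp [B, C]
  | succ k ih =>
    obtain ⟨h1, h2⟩ := ih
    constructor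
    · show 6 * B (k+1) - B k = 3 * B (k+1) + C (k+1)
      rw [h1, h2]; ring
    · show 6 * C (k+1) - C k = 3 * C (k+1) + 8 * B (k+1)
      rw [h1, h2]; ring

lemma key : ∀ n, C n ^ 2 - 8 * B n ^ 2 = 1 := by
  intro n
  induction n with
  | zero => simp [B, C]
  | succ k ih =>
    obtain ⟨h1, h2⟩ := BC k
    rw [h1, h2]; nlinarith [ih]

theorem pell_neg_seven_families (n : ℕ) (hn : 1 ≤ n) :
    2 * (6 * B (n - 1) + C (n - 1)) ^ 2 - (4 * B (n - 1) + 3 * C (n - 1)) ^ 2 = -7 ∧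
    2 * (6 * B n - C n) ^ 2 - (-4 * B n + 3 * C n) ^ 2 = -7 := by
  have h1 := key (n - 1)
  have h2 := key n
  constructor <;> nlinarith [h1, h2]
end
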